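/- Let Z ∈ C^{d×d} have nonzero columns, K = Ddiag(Zᴴ·Z), and let ΔZ be a perturbation and P̃ an invertible diagonal matrix. Define P_opt = Ddiag(Zᴴ·(Z+ΔZ)·P̃·K^{-1})^{-1}. Then Z − (Z + ΔZ)·P̃·P_opt = Z·Ddiag(Zᴴ·ΔZ)·K^{-1} − ΔZ + O(‖ΔZ‖²). -/
import Mathlib


open Matrix

attribute [local instance] Matrix.frobeniusNormedAddCommGroup

/-- `Ddiag` keeps the diagonal and zeros the off-diagonal entries. -/
def Ddiag {d : ℕ} (X : Matrix (Fin d) (Fin d) ℂ) : Matrix (Fin d) (Fin d) ℂ :=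
  Matrix.of fun i j => if i = j then X i j else 0

lemma Ddiag_eq {d : ℕ} (X : Matrix (Fin d) (Fin d) ℂ) :
    Ddiag X = Matrix.diagonal (fun i => X i i) := by
  ext i j
  by_cases h : i = j <;> simp [Ddiag, Matrix.diagonal, h]

lemma inv_diag {d : ℕ} (v : Fin d → ℂ) (hv : ∀ i, v i ≠ 0) :
    (Matrix.diagonal v)⁻¹ = Matrix.diagonal (fun i => (v i)⁻¹) := by
  rw [Matrix.inv_diagonal]
  have : Ring.inverse v = fun i => (v i)⁻¹ := Ring.inverse_unit ⟨v, fun i => (v i)⁻¹,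
    funext fun i => mul_inv_cancel₀ (hv i), funext fun i => inv_mul_cancel₀ (hv i)⟩
  rw [this]

lemma rpow_half_sq (x : ℝ) (hx : 0 ≤ x) : (x ^ (2:ℝ)) ^ (1/2:ℝ) = x := by
  rw [← Real.rpow_mul hx]
  norm_num

lemma entry_le_norm {d : ℕ} (A : Matrix (Fin d) (Fin d) ℂ) (i j : Fin d) :
    ‖A i j‖ ≤ ‖A‖ := by
  rw [Matrix.frobenius_norm_def]
  have hnn : ∀ i' j' : Fin d, (0:ℝ) ≤ ‖A i' j'‖ ^ (2:ℝ) := fun i' j' =>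
    Real.rpow_nonneg (norm_nonneg _) _
  have h1 : ‖A i j‖ ^ (2:ℝ) ≤ ∑ i', ∑ j', ‖A i' j'‖ ^ (2:ℝ) := by
    have ha : ‖A i j‖ ^ (2:ℝ) ≤ ∑ j', ‖A i j'‖ ^ (2:ℝ) :=
      Finset.single_le_sum (f := fun j' => ‖A i j'‖ ^ (2:ℝ)) (fun j' _ => hnn i j')
        (Finset.mem_univ j)
    have hb : ∑ j', ‖A i j'‖ ^ (2:ℝ) ≤ ∑ i', ∑ j', ‖A i' j'‖ ^ (2:ℝ) :=
      Finset.single_le_sum (f := fun i' => ∑ j', ‖A i' j'‖ ^ (2:ℝ))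
        (fun i' _ => Finset.sum_nonneg fun j' _ => hnn i' j') (Finset.mem_univ i)
    linarith
  have := Real.rpow_le_rpow (hnn i j) h1 (by norm_num : (0:ℝ) ≤ 1/2)
  rwa [rpow_half_sq _ (norm_nonneg _)] at this

lemma norm_le_entries {d : ℕ} (A : Matrix (Fin d) (Fin d) ℂ) (M : ℝ) (hM : 0 ≤ M)
    (h : ∀ i j, ‖A i j‖ ≤ M) : ‖A‖ ≤ d * M := by
  rw [Matrix.frobenius_norm_def]
  have h1 : ∑ i, ∑ j, ‖A i j‖ ^ (2:ℝ) ≤ (↑d * M) ^ (2:ℝ) := by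
    have step : ∀ i j : Fin d, ‖A i j‖ ^ (2:ℝ) ≤ M ^ (2:ℝ) := fun i j =>
      Real.rpow_le_rpow (norm_nonneg _) (h i j) (by norm_num)
    have h2 : ∑ i, ∑ j, ‖A i j‖ ^ (2:ℝ) ≤ ∑ _i : Fin d, ∑ _j : Fin d, M ^ (2:ℝ) :=
      Finset.sum_le_sum fun i _ => Finset.sum_le_sum fun j _ => step i j
    have h3 : ∑ _i : Fin d, ∑ _j : Fin d, M ^ (2:ℝ) = (d:ℝ) * ((d:ℝ) * M ^ (2:ℝ)) := by
      simp [mul_assoc]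
    have h4 : (d:ℝ) * ((d:ℝ) * M ^ (2:ℝ)) ≤ (↑d * M) ^ (2:ℝ) := by
      rw [Real.rpow_two, Real.rpow_two]
      have : (0:ℝ) ≤ (d:ℝ) := Nat.cast_nonneg d
      nlinarith
    rw [h3] at h2
    exact h2.trans h4
  have := Real.rpow_le_rpow
    (Finset.sum_nonneg fun i _ => Finset.sum_nonneg fun j _ => Real.rpow_nonneg (norm_nonneg _) _)
    h1 (by norm_num : (0:ℝ) ≤ 1/2)
  rwa [rpow_half_sq _ (by positivity)] at this

/-- Theorem 1 (optimal scaling): with `K = Ddiag(Zᴴ Z)` and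
`P_opt = Ddiag(Zᴴ(Z+ΔZ)P̃K⁻¹)⁻¹`,
`Z − (Z+ΔZ)·P̃·P_opt = Z·Ddiag(Zᴴ·ΔZ)·K⁻¹ − ΔZ + O(‖ΔZ‖²)`. -/
theorem stmt6 {d : ℕ} (Z : Matrix (Fin d) (Fin d) ℂ)
    (hcols : ∀ j, ∃ i, Z i j ≠ 0)
    (Pt : Matrix (Fin d) (Fin d) ℂ) (hPtdiag : ∀ i j, i ≠ j → Pt i j = 0)
    (hPt : IsUnit Pt.det) :
    ∃ C ε : ℝ, 0 < C ∧ 0 < ε ∧ ∀ ΔZ : Matrix (Fin d) (Fin d) ℂ, ‖ΔZ‖ ≤ ε →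
      ‖(Z - (Z + ΔZ) * Pt * (Ddiag (Zᴴ * (Z + ΔZ) * Pt * (Ddiag (Zᴴ * Z))⁻¹))⁻¹) -
          (Z * Ddiag (Zᴴ * ΔZ) * (Ddiag (Zᴴ * Z))⁻¹ - ΔZ)‖ ≤ C * ‖ΔZ‖ ^ 2 := by
  classical
  set p : Fin d → ℂ := fun j => Pt j j with hpdef
  clear_value p
  have hPtd : Pt = Matrix.diagonal p := by
    ext i j
    by_cases h : i = j
    · subst h; simp [Matrix.diagonal, hpdef]
    · simp [Matrix.diagonal, h, hPtdiag i j h]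
  have hpne : ∀ j, p j ≠ 0 := by
    intro j hpj
    have hdet : Pt.det = ∏ i, p i := by rw [hPtd, Matrix.det_diagonal]
    rw [hdet] at hPt
    exact hPt.ne_zero (Finset.prod_eq_zero (Finset.mem_univ j) hpj)
  set k : Fin d → ℂ := fun j => (Zᴴ * Z) j j with hkdef
  clear_value k
  have hkre : ∀ j, k j = ((∑ i, Complex.normSq (Z i j) : ℝ) : ℂ) := by
    intro j
    simp only [hkdef, Matrix.mul_apply, Matrix.conjTranspose_apply, Complex.ofReal_sum]
    refine Finset.sum_congr rfl fun i _ => ?_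
    rw [Complex.normSq_eq_conj_mul_self]
    rfl
  have hkne : ∀ j, k j ≠ 0 := by
    intro j
    rw [hkre j]
    rw [Ne, Complex.ofReal_eq_zero]
    obtain ⟨i, hi⟩ := hcols j
    have : 0 < ∑ i, Complex.normSq (Z i j) :=
      Finset.sum_pos' (fun i _ => Complex.normSq_nonneg _)
        ⟨i, Finset.mem_univ i, by simpa [Complex.normSq_pos] using hi⟩
    exact ne_of_gt this
  have hknorm : ∀ j, 0 < ‖k j‖ := fun j => norm_pos_iff.mpr (hkne j)
  set B : ℝ := 1 + ∑ j, (d * ‖Z‖) / ‖k j‖ with hBdef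
  clear_value B
  have hterm : ∀ j : Fin d, 0 ≤ (d * ‖Z‖) / ‖k j‖ := fun j => by positivity
  have hB1 : (1:ℝ) ≤ B := by
    have : 0 ≤ ∑ j, (d * ‖Z‖) / ‖k j‖ := Finset.sum_nonneg fun j _ => hterm j
    rw [hBdef]; linarith
  have hBpos : (0:ℝ) < B := by linarith
  have hBj : ∀ j, (d:ℝ) * ‖Z‖ / ‖k j‖ ≤ B := by
    intro j
    have := Finset.single_le_sum (f := fun j => (d * ‖Z‖) / ‖k j‖)
      (fun j _ => hterm j) (Finset.mem_univ j)
    rw [hBdef]; linarith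
  have hC0 : (0:ℝ) < 2*d*B*(1+B*‖Z‖) + 1 := by
    have h1 : (0:ℝ) ≤ (d:ℝ) := Nat.cast_nonneg d
    have h3 : (0:ℝ) ≤ 1 + B*‖Z‖ := by nlinarith [norm_nonneg Z]
    have h4 : (0:ℝ) ≤ 2*(d:ℝ)*B := mul_nonneg (by positivity) hBpos.le
    nlinarith [mul_nonneg h4 h3]
  have hε0 : (0:ℝ) < 1/(2*B) := by
    apply div_pos one_pos; linarith
  refine ⟨2*d*B*(1+B*‖Z‖) + 1, 1/(2*B), hC0, hε0, fun ΔZ hΔ => ?_⟩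
  have hΔ0 : (0:ℝ) ≤ ‖ΔZ‖ := norm_nonneg _
  set D : Fin d → ℂ := fun j => (Zᴴ * ΔZ) j j with hDdef
  clear_value D
  have hDb : ∀ j, ‖D j‖ ≤ d * ‖Z‖ * ‖ΔZ‖ := by
    intro j
    have hDsum : D j = ∑ i, (Zᴴ) j i * ΔZ i j := by rw [hDdef]; rfl
    have h1 : ‖D j‖ ≤ ∑ i, ‖(Zᴴ) j i * ΔZ i j‖ := by
      rw [hDsum]; exact norm_sum_le _ _
    have h2 : ∀ i : Fin d, ‖(Zᴴ) j i * ΔZ i j‖ ≤ ‖Z‖ * ‖ΔZ‖ := by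
      intro i
      rw [norm_mul]
      have e1 : ‖(Zᴴ) j i‖ = ‖Z i j‖ := by
        simp [Matrix.conjTranspose_apply]
      rw [e1]
      exact mul_le_mul (entry_le_norm Z i j) (entry_le_norm ΔZ i j) (norm_nonneg _)
        (norm_nonneg _)
    calc ‖D j‖ ≤ ∑ i, ‖(Zᴴ) j i * ΔZ i j‖ := h1
      _ ≤ ∑ _i : Fin d, ‖Z‖ * ‖ΔZ‖ := Finset.sum_le_sum fun i _ => h2 i
      _ = d * ‖Z‖ * ‖ΔZ‖ := by simp [mul_assoc]
  have hDk : ∀ j, ‖D j‖ ≤ ‖k j‖ * (B * ‖ΔZ‖) := by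
    intro j
    have h1 : (d:ℝ) * ‖Z‖ ≤ B * ‖k j‖ := by
      have := hBj j
      rw [div_le_iff₀ (hknorm j)] at this
      linarith
    calc ‖D j‖ ≤ d * ‖Z‖ * ‖ΔZ‖ := hDb j
      _ ≤ B * ‖k j‖ * ‖ΔZ‖ := by nlinarith
      _ = ‖k j‖ * (B * ‖ΔZ‖) := by ring
  have hBΔ : B * ‖ΔZ‖ ≤ 1/2 := by
    have : ‖ΔZ‖ ≤ 1/(2*B) := hΔ
    have heq : B * (1/(2*B)) = 1/2 := by
      field_simp
    calc B * ‖ΔZ‖ ≤ B * (1/(2*B)) := mul_le_mul_of_nonneg_left this hBpos.le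
      _ = 1/2 := heq
  have hBΔ0 : 0 ≤ B * ‖ΔZ‖ := by positivity
  have hhalf : ∀ j, ‖k j‖/2 ≤ ‖k j + D j‖ := by
    intro j
    have h1 : ‖k j‖ ≤ ‖k j + D j‖ + ‖D j‖ := by
      calc ‖k j‖ = ‖(k j + D j) - D j‖ := by ring_nf
        _ ≤ ‖k j + D j‖ + ‖D j‖ := norm_sub_le _ _
    have h2 : ‖D j‖ ≤ ‖k j‖ / 2 := by
      calc ‖D j‖ ≤ ‖k j‖ * (B * ‖ΔZ‖) := hDk j
        _ ≤ ‖k j‖ * (1/2) := by nlinarith [hknorm j]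
        _ = ‖k j‖ / 2 := by ring
    linarith
  have hkDne : ∀ j, k j + D j ≠ 0 := by
    intro j h
    have := hhalf j
    rw [h, norm_zero] at this
    have := hknorm j
    linarith
  -- matrix computations
  have hKinv : (Ddiag (Zᴴ * Z))⁻¹ = Matrix.diagonal (fun j => (k j)⁻¹) := by
    rw [Ddiag_eq, ← hkdef, inv_diag _ hkne]
  set m : Fin d → ℂ := fun j => (k j + D j) * p j * (k j)⁻¹ with hmdef
  clear_value m
  have hmne : ∀ j, m j ≠ 0 := by
    intro j
    rw [hmdef]
    exact mul_ne_zero (mul_ne_zero (hkDne j) (hpne j)) (inv_ne_zero (hkne j))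
  have hM : Ddiag (Zᴴ * (Z + ΔZ) * Pt * (Ddiag (Zᴴ * Z))⁻¹) = Matrix.diagonal m := by
    rw [hKinv, Ddiag_eq]
    refine congrArg Matrix.diagonal (funext fun j => ?_)
    rw [Matrix.mul_diagonal]
    rw [hPtd, Matrix.mul_diagonal]
    have h5 : (Zᴴ * (Z + ΔZ)) j j = k j + D j := by
      rw [Matrix.mul_add, Matrix.add_apply, hkdef, hDdef]
    rw [h5, hmdef, hpdef]
  have hMinv : (Ddiag (Zᴴ * (Z + ΔZ) * Pt * (Ddiag (Zᴴ * Z))⁻¹))⁻¹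
      = Matrix.diagonal (fun j => (m j)⁻¹) := by
    rw [hM, inv_diag _ hmne]
  set R : Matrix (Fin d) (Fin d) ℂ :=
    (Z - (Z + ΔZ) * Pt * (Ddiag (Zᴴ * (Z + ΔZ) * Pt * (Ddiag (Zᴴ * Z))⁻¹))⁻¹) -
      (Z * Ddiag (Zᴴ * ΔZ) * (Ddiag (Zᴴ * Z))⁻¹ - ΔZ) with hRdef
  have hRe : ∀ i j, R i j = D j / (k j + D j) * (ΔZ i j - Z i j * D j / k j) := by
    intro i j
    rw [hRdef]
    rw [hMinv, hKinv, hPtd, Ddiag_eq (Zᴴ * ΔZ), ← hDdef]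
    simp only [Matrix.sub_apply, Matrix.add_apply, Matrix.mul_diagonal]
    rw [hmdef]
    have hkj := hkne j
    have hpj := hpne j
    have hkDj := hkDne j
    field_simp
    ring
  have hentry : ∀ i j, ‖R i j‖ ≤ 2*B*(1+B*‖Z‖) * ‖ΔZ‖^2 := by
    intro i j
    rw [hRe i j]
    rw [norm_mul]
    have h1 : ‖D j / (k j + D j)‖ ≤ 2 * (B * ‖ΔZ‖) := by
      rw [norm_div]
      rw [div_le_iff₀ (lt_of_lt_of_le (by linarith [hknorm j]) (hhalf j))]
      calc ‖D j‖ ≤ ‖k j‖ * (B * ‖ΔZ‖) := hDk j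
        _ = 2 * (B * ‖ΔZ‖) * (‖k j‖ / 2) := by ring
        _ ≤ 2 * (B * ‖ΔZ‖) * ‖k j + D j‖ :=
            mul_le_mul_of_nonneg_left (hhalf j) (by positivity)
    have h2 : ‖ΔZ i j - Z i j * D j / k j‖ ≤ ‖ΔZ‖ + ‖Z‖ * (B * ‖ΔZ‖) := by
      have h3 : ‖Z i j * D j / k j‖ ≤ ‖Z‖ * (B * ‖ΔZ‖) := by
        rw [norm_div, norm_mul, div_le_iff₀ (hknorm j)]
        have := hDk j
        have := entry_le_norm Z i j
        nlinarith [norm_nonneg (Z i j), norm_nonneg (D j), hknorm j]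
      calc ‖ΔZ i j - Z i j * D j / k j‖ ≤ ‖ΔZ i j‖ + ‖Z i j * D j / k j‖ := norm_sub_le _ _
        _ ≤ ‖ΔZ‖ + ‖Z‖ * (B * ‖ΔZ‖) := add_le_add (entry_le_norm ΔZ i j) h3
    calc ‖D j / (k j + D j)‖ * ‖ΔZ i j - Z i j * D j / k j‖
        ≤ (2 * (B * ‖ΔZ‖)) * (‖ΔZ‖ + ‖Z‖ * (B * ‖ΔZ‖)) := by
          apply mul_le_mul h1 h2 (norm_nonneg _) (by positivity)
      _ = 2*B*(1+B*‖Z‖) * ‖ΔZ‖^2 := by ring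
  have hnormR : ‖R‖ ≤ d * (2*B*(1+B*‖Z‖) * ‖ΔZ‖^2) :=
    norm_le_entries R _ (by positivity) hentry
  calc ‖R‖ ≤ d * (2*B*(1+B*‖Z‖) * ‖ΔZ‖^2) := hnormR
    _ ≤ (2*d*B*(1+B*‖Z‖) + 1) * ‖ΔZ‖^2 := by nlinarith [sq_nonneg ‖ΔZ‖]
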